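/- arXiv:math/0110222 — 3 statements merged into one kernel-verified Lean document; each statement's English description precedes it below -/
import Mathlib

section
/- Let A = (3) acting on ℝ (i.e. x ↦ 3x) with digit set D = {0, 1, 2, 3}, and define multisets S^{(k)} on ℝ by S^{(0)} = {0} and S^{(k+1)} = 3·S^{(k)} + D (multiset sum, counting multiplicities). Then for every k ≥ 0 the multiplicity of the point 3^k in S^{(m)} equals k + 1 for all sufficiently large m; in particular the limiting multiplicity function m_X on X = lim_k S^{(k)} satisfies m_X(3^k) = k + 1 and is unbounded. -/
/-!
Every point of `S⁽ᵐ⁾` is a natural number `∑ dᵢ 3ⁱ` with digits `dᵢ ∈ {0,1,2,3}`, so at an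
integer `3x + r` only the digits `d ≡ r (mod 3)` contribute: `S⁽ᵐ⁺¹⁾(3x) = S⁽ᵐ⁾(x) + S⁽ᵐ⁾(x - 1)`
and `S⁽ᵐ⁺¹⁾(3x + r) = S⁽ᵐ⁾(x)` for `r = 1, 2`. Hence `0` and `3ʲ - 1 = 3(3ʲ⁻¹ - 1) + 2` keep
multiplicity one, and `3ᵏ⁺¹ = 3 · 3ᵏ` gains one over `3ᵏ` from `3ᵏ - 1`.
-/

structure IsDigitIterate (S : ℕ → ℝ → ℕ) : Prop where
  zero : ∀ x : ℝ, S 0 x = if x = 0 then 1 else 0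
  succ : ∀ (k : ℕ) (x : ℝ), S (k + 1) x = ∑ d ∈ ({0, 1, 2, 3} : Finset ℝ), S k ((x - d) / 3)

namespace IsDigitIterate

variable {S : ℕ → ℝ → ℕ}

theorem succ_eq (hS : IsDigitIterate S) (k : ℕ) (x : ℝ) :
    S (k + 1) x = S k (x / 3) + S k ((x - 1) / 3) + S k ((x - 2) / 3) + S k ((x - 3) / 3) := by
  rw [hS.succ, Finset.sum_insert (by norm_num), Finset.sum_insert (by norm_num),
    Finset.sum_insert (by norm_num), Finset.sum_singleton, sub_zero]
  ring

theorem eq_zero_of_forall_ne_natCast (hS : IsDigitIterate S) {m : ℕ} {x : ℝ}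
    (hx : ∀ n : ℕ, x ≠ n) : S m x = 0 := by
  induction m generalizing x with
  | zero => simpa [hS.zero] using hx 0
  | succ m ih =>
    have hdigit (d : ℕ) : S m ((x - d) / 3) = 0 :=
      ih fun n h => hx (3 * n + d) (by push_cast; linarith [div_eq_iff_mul_eq three_ne_zero |>.mp h])
    have h0 := hdigit 0
    have h1 := hdigit 1
    have h2 := hdigit 2
    have h3 := hdigit 3
    simp only [Nat.cast_zero, Nat.cast_one, Nat.cast_ofNat, sub_zero] at h0 h1 h2 h3
    rw [hS.succ_eq, h0, h1, h2, h3]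

theorem eq_zero_of_neg (hS : IsDigitIterate S) {m : ℕ} {x : ℝ} (hx : x < 0) : S m x = 0 :=
  hS.eq_zero_of_forall_ne_natCast fun n h => (h ▸ hx).not_ge n.cast_nonneg

theorem intCast_div_three_eq_zero (hS : IsDigitIterate S) {m : ℕ} {y : ℤ} (hy : ¬ 3 ∣ y) :
    S m ((y : ℝ) / 3) = 0 :=
  hS.eq_zero_of_forall_ne_natCast fun n h => hy ⟨n, by
    rw [div_eq_iff three_ne_zero] at h
    exact_mod_cast h.trans (mul_comm _ _)⟩

theorem succ_three_mul (hS : IsDigitIterate S) (m : ℕ) (x : ℤ) :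
    S (m + 1) (3 * x) = S m x + S m (x - 1) := by
  have h1 : S m ((3 * x - 1) / 3) = 0 := by
    exact_mod_cast hS.intCast_div_three_eq_zero (y := 3 * x - 1) (by omega)
  have h2 : S m ((3 * x - 2) / 3) = 0 := by
    exact_mod_cast hS.intCast_div_three_eq_zero (y := 3 * x - 2) (by omega)
  rw [hS.succ_eq, h1, h2, mul_div_cancel_left₀ _ three_ne_zero,
    show (3 * (x : ℝ) - 3) / 3 = x - 1 by ring, add_zero, add_zero]

theorem succ_three_mul_add_one (hS : IsDigitIterate S) (m : ℕ) (x : ℤ) :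
    S (m + 1) (3 * x + 1) = S m x := by
  have h0 : S m ((3 * x + 1) / 3) = 0 := by
    exact_mod_cast hS.intCast_div_three_eq_zero (y := 3 * x + 1) (by omega)
  have h2 : S m ((3 * x + 1 - 2) / 3) = 0 := by
    exact_mod_cast hS.intCast_div_three_eq_zero (y := 3 * x + 1 - 2) (by omega)
  have h3 : S m ((3 * x + 1 - 3) / 3) = 0 := by
    exact_mod_cast hS.intCast_div_three_eq_zero (y := 3 * x + 1 - 3) (by omega)
  rw [hS.succ_eq, h0, h2, h3, show (3 * (x : ℝ) + 1 - 1) / 3 = x by ring,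
    zero_add, add_zero, add_zero]

theorem succ_three_mul_add_two (hS : IsDigitIterate S) (m : ℕ) (x : ℤ) :
    S (m + 1) (3 * x + 2) = S m x := by
  have h0 : S m ((3 * x + 2) / 3) = 0 := by
    exact_mod_cast hS.intCast_div_three_eq_zero (y := 3 * x + 2) (by omega)
  have h1 : S m ((3 * x + 2 - 1) / 3) = 0 := by
    exact_mod_cast hS.intCast_div_three_eq_zero (y := 3 * x + 2 - 1) (by omega)
  have h3 : S m ((3 * x + 2 - 3) / 3) = 0 := by
    exact_mod_cast hS.intCast_div_three_eq_zero (y := 3 * x + 2 - 3) (by omega)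
  rw [hS.succ_eq, h0, h1, h3, show (3 * (x : ℝ) + 2 - 2) / 3 = x by ring,
    zero_add, zero_add, add_zero]

theorem apply_zero (hS : IsDigitIterate S) (m : ℕ) : S m 0 = 1 := by
  induction m with
  | zero => simp [hS.zero]
  | succ m ih =>
    simpa [ih, hS.eq_zero_of_neg (x := -1) (by norm_num)] using hS.succ_three_mul m 0

theorem apply_three_pow_sub_one (hS : IsDigitIterate S) {j m : ℕ} (hjm : j ≤ m) :
    S m ((3 : ℝ) ^ j - 1) = 1 := by
  induction j generalizing m with
  | zero => simpa using hS.apply_zero m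
  | succ j ih =>
    obtain ⟨m, rfl⟩ : ∃ m', m = m' + 1 := ⟨m - 1, by omega⟩
    have h := hS.succ_three_mul_add_two m ((3 : ℤ) ^ j - 1)
    push_cast at h
    rw [show (3 : ℝ) ^ (j + 1) - 1 = 3 * (3 ^ j - 1) + 2 by ring, h, ih (by omega)]

theorem apply_three_pow (hS : IsDigitIterate S) {k m : ℕ} (hkm : k < m) :
    S m ((3 : ℝ) ^ k) = k + 1 := by
  obtain ⟨m, rfl⟩ : ∃ m', m = m' + 1 := ⟨m - 1, by omega⟩
  induction k generalizing m with
  | zero => simpa [hS.apply_zero] using hS.succ_three_mul_add_one m 0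
  | succ k ih =>
    obtain ⟨m, rfl⟩ : ∃ m', m = m' + 1 := ⟨m - 1, by omega⟩
    have h := hS.succ_three_mul (m + 1) ((3 : ℤ) ^ k)
    push_cast at h
    rw [pow_succ', h, ih m (by omega), hS.apply_three_pow_sub_one (by omega)]

end IsDigitIterate

/-- For the inflation data A = (3), D = {0,1,2,3} on ℝ, the iterated multisets
S⁽⁰⁾ = {0}, S⁽ᵏ⁺¹⁾ = 3·S⁽ᵏ⁾ + D (counting multiplicity, with multiplicity functions
S k : ℝ → ℕ) have the property that the multiplicity of the point 3^k stabilizes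
at the value k + 1; in particular the limiting multiplicity function is unbounded. -/
theorem stmt11 (S : ℕ → ℝ → ℕ)
    (hS0 : ∀ x : ℝ, S 0 x = if x = 0 then 1 else 0)
    (hSrec : ∀ (k : ℕ) (x : ℝ),
      S (k + 1) x = ∑ dv ∈ ({0, 1, 2, 3} : Finset ℝ), S k ((x - dv) / 3)) :
    ∀ k : ℕ, ∃ M : ℕ, ∀ m ≥ M, S m ((3 : ℝ) ^ k) = k + 1 := by
  intro k
  exact ⟨k + 1, fun m hm => IsDigitIterate.apply_three_pow ⟨hS0, hSrec⟩ hm⟩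
end

section
/- Let A = (2) on ℝ, n = 2, and D_{11} = D_{12} = D_{21} = D_{22} = {0,1}. There is no pair (X_1, X_2) of nonempty discrete multisets on ℝ (multiplicity functions ℝ → ℕ with locally finite support and finite values) satisfying X_i = (2·X_1 + D_{i1}) ∨ (2·X_2 + D_{i2}) for i = 1, 2: in any multiset solution every point of X_1 ∨ X_2 has infinite multiplicity. -/
/-!
Both equations have the same right-hand side, so `m₁ = m₂ =: m` and
`m x = 2 (m (x/2) + m ((x-1)/2))`. Every nonzero multiplicity is therefore at least twice
another nonzero multiplicity, which is impossible for natural numbers by infinite descent.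
-/

theorem eq_zero_of_forall_ne_zero_exists_lt {α : Type*} (m : α → ℕ)
    (h : ∀ y, m y ≠ 0 → ∃ z, m z ≠ 0 ∧ m z < m y) (x : α) : m x = 0 := by
  induction hx : m x using Nat.strong_induction_on generalizing x with
  | _ n ih =>
    by_contra hn
    obtain ⟨z, hz, hlt⟩ := h x (hx ▸ hn)
    exact hz (ih (m z) (hx ▸ hlt) z rfl)

theorem eq_zero_of_eq_two_mul_add {α : Type*} {m : α → ℕ} (f g : α → α)
    (hm : ∀ x, m x = 2 * (m (f x) + m (g x))) (x : α) : m x = 0 := by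
  refine eq_zero_of_forall_ne_zero_exists_lt m (fun y hy => ?_) x
  rw [hm y] at hy ⊢
  by_cases hf : m (f y) = 0
  · exact ⟨g y, by omega, by omega⟩
  · exact ⟨f y, hf, by omega⟩

theorem stmt13_general (m1 m2 : ℝ → ℕ)
    (h1 : ∀ x : ℝ, m1 x =
      ∑ dv ∈ ({0, 1} : Finset ℝ), (m1 ((x - dv) / 2) + m2 ((x - dv) / 2)))
    (h2 : ∀ x : ℝ, m2 x =
      ∑ dv ∈ ({0, 1} : Finset ℝ), (m1 ((x - dv) / 2) + m2 ((x - dv) / 2)))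
    (hne1 : ∃ x, m1 x ≠ 0) :
    False := by
  obtain rfl : m1 = m2 := funext fun x => by rw [h1 x, h2 x]
  have hm : ∀ x, m1 x = 2 * (m1 (x / 2) + m1 ((x - 1) / 2)) := fun x => by
    rw [h1 x, Finset.sum_pair zero_ne_one, sub_zero]
    ring
  obtain ⟨x, hx⟩ := hne1
  exact hx (eq_zero_of_eq_two_mul_add _ _ hm x)

/-- For A = (2), n = 2, D₁₁ = D₁₂ = D₂₁ = D₂₂ = {0,1} on ℝ, there is no pair of
nonempty discrete multisets (multiplicity functions ℝ → ℕ with locally finite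
support and finite values) solving the inflation functional equation
X_i = (2·X₁ + D) ∨ (2·X₂ + D), i = 1,2. -/
theorem stmt13 (m1 m2 : ℝ → ℕ)
    (h1 : ∀ x : ℝ, m1 x =
      ∑ dv ∈ ({0, 1} : Finset ℝ), (m1 ((x - dv) / 2) + m2 ((x - dv) / 2)))
    (h2 : ∀ x : ℝ, m2 x =
      ∑ dv ∈ ({0, 1} : Finset ℝ), (m1 ((x - dv) / 2) + m2 ((x - dv) / 2)))
    (hne1 : ∃ x, m1 x ≠ 0) (hne2 : ∃ x, m2 x ≠ 0)
    (hlf1 : ∀ K : Set ℝ, IsCompact K → {x ∈ K | m1 x ≠ 0}.Finite)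
    (hlf2 : ∀ K : Set ℝ, IsCompact K → {x ∈ K | m2 x ≠ 0}.Finite) :
    False :=
  stmt13_general m1 m2 h1 h2 hne1
end

section
/- Let A = (3) on ℝ with single digit set D = {−1, 0, 1}. The set X = (−3/8 + ℤ) ∪ (−1/8 + ℤ) satisfies the inflation equation X = 3X + D (as sets, each point arising with total multiplicity counting one), X is a Delone set in ℝ, and the translates {[−1/2, 1/2] + x : x ∈ X} cover ℝ with every point covered exactly 2 times except for a set of measure zero (i.e. a multiple tiling of thickness 2). -/
open MeasureTheory

/-!
`X` is the union of the cosets `ℤ - 3/8` and `ℤ - 1/8`. Since `{-1, 0, 1}` is a complete residue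
system modulo `3`, inflation maps the coset `ℤ + c` onto `ℤ + 3c`, and multiplication by `3`
swaps `-1/8` and `-3/8` modulo `ℤ`. A coset `ℤ + c` meets `[a, a + 1]` in exactly one point
unless `a` itself lies in it, so off a countable set of `t` the tile `[t - 1/2, t + 1/2]`
contains exactly one point of each coset.
-/

def intCoset (c : ℝ) : Set ℝ := Set.range fun k : ℤ => (k : ℝ) + c

def inflate (S : Set ℝ) : Set ℝ :=
  {y | ∃ x ∈ S, ∃ d ∈ ({-1, 0, 1} : Set ℝ), y = 3 * x + d}

theorem intCoset_add_intCast (c : ℝ) (m : ℤ) : intCoset (c + m) = intCoset c := by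
  ext y
  constructor
  · rintro ⟨k, rfl⟩
    exact ⟨k + m, by push_cast; ring⟩
  · rintro ⟨k, rfl⟩
    exact ⟨k - m, by push_cast; ring⟩

theorem inflate_union (S T : Set ℝ) : inflate (S ∪ T) = inflate S ∪ inflate T := by
  ext y
  simp only [inflate, Set.mem_union, Set.mem_ofPred_eq]
  constructor
  · rintro ⟨x, hS | hT, hd⟩
    exacts [Or.inl ⟨x, hS, hd⟩, Or.inr ⟨x, hT, hd⟩]
  · rintro (⟨x, hS, hd⟩ | ⟨x, hT, hd⟩)
    exacts [⟨x, Or.inl hS, hd⟩, ⟨x, Or.inr hT, hd⟩]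

theorem inflate_intCoset (c : ℝ) : inflate (intCoset c) = intCoset (3 * c) := by
  ext y
  constructor
  · rintro ⟨_, ⟨k, rfl⟩, d, hd, rfl⟩
    obtain ⟨m, rfl⟩ : ∃ m : ℤ, d = m := by
      rcases hd with rfl | rfl | rfl
      exacts [⟨-1, by simp⟩, ⟨0, by simp⟩, ⟨1, by simp⟩]
    exact ⟨3 * k + m, by push_cast; ring⟩
  · rintro ⟨n, rfl⟩
    obtain ⟨k, d, hd, rfl⟩ : ∃ k d : ℤ, (d = -1 ∨ d = 0 ∨ d = 1) ∧ n = 3 * k + d :=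
      ⟨(n + 1) / 3, n - 3 * ((n + 1) / 3), by omega, by omega⟩
    refine ⟨k + c, ⟨k, rfl⟩, d, ?_, by push_cast; ring⟩
    rcases hd with rfl | rfl | rfl <;> simp

theorem intCoset_inter_closedBall_nonempty (c z : ℝ) :
    (intCoset c ∩ Metric.closedBall z (1 / 2)).Nonempty := by
  refine ⟨round (z - c) + c, ⟨round (z - c), rfl⟩, ?_⟩
  rw [Metric.mem_closedBall, Real.dist_eq, ← abs_neg, neg_sub, sub_add_eq_sub_sub_swap]
  exact abs_sub_round (z - c)

theorem subsingleton_inter_ball_of_subset_range_mul {δ : ℝ} (hδ : 0 < δ) {S : Set ℝ}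
    (hS : S ⊆ Set.range fun m : ℤ => (m : ℝ) * δ) (z : ℝ) :
    (S ∩ Metric.ball z (δ / 2)).Subsingleton := by
  rintro a ⟨haS, ha⟩ b ⟨hbS, hb⟩
  obtain ⟨m, rfl⟩ := hS haS
  obtain ⟨n, rfl⟩ := hS hbS
  have hdist : |((m - n : ℤ) : ℝ)| * δ < 1 * δ := by
    calc |((m - n : ℤ) : ℝ)| * δ = dist ((m : ℝ) * δ) (n * δ) := by
          rw [Real.dist_eq, ← sub_mul, abs_mul, abs_of_pos hδ]; push_cast; rfl
      _ ≤ dist ((m : ℝ) * δ) z + dist z (n * δ) := dist_triangle _ _ _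
      _ < δ / 2 + δ / 2 := add_lt_add ha (Metric.mem_ball'.mp hb)
      _ = 1 * δ := by ring
  have hmn : |m - n| < 1 := by exact_mod_cast lt_of_mul_lt_mul_right hdist hδ.le
  rw [show m = n by rw [Int.abs_lt_one_iff] at hmn; omega]

theorem intCoset_inter_Icc {c a : ℝ} (ha : a ∉ intCoset c) :
    intCoset c ∩ Set.Icc a (a + 1) = {(⌈a - c⌉ : ℝ) + c} := by
  have hlt : a - c < ⌈a - c⌉ :=
    (Int.le_ceil _).lt_of_ne fun h => ha ⟨⌈a - c⌉, by simp only [← h]; ring⟩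
  ext y
  simp only [Set.mem_inter_iff, Set.mem_Icc, Set.mem_singleton_iff]
  constructor
  · rintro ⟨⟨k, rfl⟩, hlo, hhi⟩
    have hk_ge : ⌈a - c⌉ ≤ k := Int.ceil_le.mpr (by linarith)
    have hk_lt : (k : ℝ) < ⌈a - c⌉ + 1 := by linarith
    have hk_lt : k < ⌈a - c⌉ + 1 := by exact_mod_cast hk_lt
    rw [show k = ⌈a - c⌉ by omega]
  · rintro rfl
    exact ⟨⟨_, rfl⟩, by linarith, by linarith [Int.ceil_lt_add_one (a - c)]⟩

theorem ae_sub_notMem_intCoset (c s : ℝ) : ∀ᵐ t ∂volume, t - s ∉ intCoset c := by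
  filter_upwards [measure_eq_zero_iff_ae_notMem.mp
    ((Set.countable_range fun k : ℤ => (k : ℝ) + (c + s)).measure_zero volume)]
    with t ht ⟨k, hk⟩
  exact ht ⟨k, by linarith⟩

def cosetPair : Set ℝ := intCoset (-3/8) ∪ intCoset (-1/8)

theorem inflate_cosetPair : inflate cosetPair = cosetPair := by
  rw [cosetPair, inflate_union, inflate_intCoset, inflate_intCoset, Set.union_comm,
    show 3 * (-1/8 : ℝ) = -3/8 by norm_num, show 3 * (-3/8 : ℝ) = -1/8 + (-1 : ℤ) by norm_num,
    intCoset_add_intCast]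

theorem cosetPair_subset_range_mul : cosetPair ⊆ Set.range fun m : ℤ => (m : ℝ) * (1 / 8) := by
  rintro _ (⟨k, rfl⟩ | ⟨k, rfl⟩)
  exacts [⟨8 * k - 3, by push_cast; ring⟩, ⟨8 * k - 1, by push_cast; ring⟩]

theorem disjoint_intCoset_neg_three_eighths_neg_one_eighth :
    Disjoint (intCoset (-3/8)) (intCoset (-1/8)) := by
  rw [Set.disjoint_left]
  rintro _ ⟨k, rfl⟩ ⟨j, hj⟩
  dsimp only at hj
  have : ((4 * (k - j) : ℤ) : ℝ) = 1 := by push_cast; linarith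
  norm_cast at this
  omega

theorem ncard_cosetPair_inter_Icc {a : ℝ} (h₁ : a ∉ intCoset (-3/8)) (h₂ : a ∉ intCoset (-1/8)) :
    (cosetPair ∩ Set.Icc a (a + 1)).ncard = 2 := by
  rw [cosetPair, Set.union_inter_distrib_right, intCoset_inter_Icc h₁, intCoset_inter_Icc h₂,
    Set.singleton_union]
  exact Set.ncard_pair
    (disjoint_intCoset_neg_three_eighths_neg_one_eighth.ne_of_mem ⟨_, rfl⟩ ⟨_, rfl⟩)

/-- For A = (3), D = {-1,0,1} on ℝ: the set X = (-3/8 + ℤ) ∪ (-1/8 + ℤ) satisfies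
the inflation equation X = 3X + D, is a Delone set (uniformly discrete and
relatively dense), and the translates of the tile T = [-1/2, 1/2] by X cover
almost every point of ℝ exactly twice (a multiple tiling of thickness 2). -/
theorem stmt14 (X : Set ℝ)
    (hX : X = {y : ℝ | ∃ k : ℤ, y = (k : ℝ) - 3/8 ∨ y = (k : ℝ) - 1/8}) :
    (X = {y : ℝ | ∃ x ∈ X, ∃ dv ∈ ({-1, 0, 1} : Set ℝ), y = 3 * x + dv}) ∧
    (∃ r > (0 : ℝ), ∀ z : ℝ, Set.Subsingleton (X ∩ Metric.ball z r)) ∧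
    (∃ R > (0 : ℝ), ∀ z : ℝ, (X ∩ Metric.closedBall z R).Nonempty) ∧
    (∀ᵐ t : ℝ ∂volume, (X ∩ Set.Icc (t - 1/2) (t + 1/2)).ncard = 2) := by
  obtain rfl : X = cosetPair := by
    ext y
    simp only [hX, cosetPair, intCoset, Set.mem_ofPred_eq, Set.mem_union, Set.mem_range]
    constructor
    · rintro ⟨k, rfl | rfl⟩
      exacts [Or.inl ⟨k, by ring⟩, Or.inr ⟨k, by ring⟩]
    · rintro (⟨k, rfl⟩ | ⟨k, rfl⟩)
      exacts [⟨k, Or.inl (by ring)⟩, ⟨k, Or.inr (by ring)⟩]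
  refine ⟨inflate_cosetPair.symm, ⟨1 / 16, by norm_num, fun z => ?_⟩,
    ⟨1 / 2, by norm_num, fun z => ?_⟩, ?_⟩
  · convert subsingleton_inter_ball_of_subset_range_mul (by norm_num) cosetPair_subset_range_mul z
      using 3
    norm_num
  · exact (intCoset_inter_closedBall_nonempty _ z).mono
      (Set.inter_subset_inter_left _ Set.subset_union_left)
  · filter_upwards [ae_sub_notMem_intCoset (-3/8) (1/2), ae_sub_notMem_intCoset (-1/8) (1/2)]
      with t h₁ h₂
    rw [show t + 1/2 = t - 1/2 + 1 by ring]
    exact ncard_cosetPair_inter_Icc h₁ h₂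
end
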